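/- arXiv:2604.00562 — 3 statements merged into one kernel-verified Lean document; each statement's English description precedes it below -/
import Mathlib

section
/- Equality case in the Hölder-type combination: for s ∈ (0,1), N > 1 real, and positive reals f0, f1, u0, u1, equality ((1-s)f0 + s f1)^{1/N} · ((1-s)u0 + s u1)^{(N-1)/N} = (1-s) f0^{1/N} u0^{(N-1)/N} + s f1^{1/N} u1^{(N-1)/N} holds if and only if f0/u0 = f1/u1. -/
/-!
With `α = (1 - s) u0`, `β = s u1`, `a = f0 / u0`, `b = f1 / u1` and `p = 1 / N`, the two sides
are `(α + β)` times the two sides of Jensen's inequality for the strictly concave `t ↦ t ^ p`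
at the points `a`, `b` with weights `α / (α + β)`, `β / (α + β)`; strict concavity makes
equality equivalent to `a = b`.
-/

open Real Set

theorem StrictConcaveOn.map_add_eq_iff {𝕜 E β : Type*} [Semiring 𝕜] [PartialOrder 𝕜]
    [AddCommMonoid E] [AddCommMonoid β] [PartialOrder β] [Module 𝕜 E] [Module 𝕜 β]
    {s : Set E} {f : E → β} {x y : E} {a b : 𝕜} (hf : StrictConcaveOn 𝕜 s f)
    (hx : x ∈ s) (hy : y ∈ s) (ha : 0 < a) (hb : 0 < b) (hab : a + b = 1) :
    f (a • x + b • y) = a • f x + b • f y ↔ x = y := by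
  refine ⟨fun h ↦ ?_, ?_⟩
  · by_contra hxy
    exact (hf.2 hx hy hxy ha hb hab).ne' h
  · rintro rfl
    rw [Convex.combo_self hab, Convex.combo_self hab]

namespace Real

theorem mul_rpow_div_eq {p u f : ℝ} (hu : 0 < u) (hf : 0 ≤ f) :
    u * (f / u) ^ p = f ^ p * u ^ (1 - p) := by
  rw [div_rpow hf hu.le, rpow_sub hu, rpow_one]
  field_simp

theorem add_mul_rpow_mul_rpow_one_sub_eq_iff {p α β a b : ℝ} (hp₀ : 0 < p) (hp₁ : p < 1)
    (hα : 0 < α) (hβ : 0 < β) (ha : 0 ≤ a) (hb : 0 ≤ b) :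
    (α * a + β * b) ^ p * (α + β) ^ (1 - p) = α * a ^ p + β * b ^ p ↔ a = b := by
  have hS : 0 < α + β := by positivity
  have hweights : α / (α + β) + β / (α + β) = 1 := by field_simp
  have hlhs : (α * a + β * b) ^ p * (α + β) ^ (1 - p) =
      (α + β) * (α / (α + β) * a + β / (α + β) * b) ^ p := by
    rw [← mul_rpow_div_eq hS (by positivity)]
    congr 2
    field_simp
  have hrhs : α * a ^ p + β * b ^ p =
      (α + β) * (α / (α + β) * a ^ p + β / (α + β) * b ^ p) := by
    field_simp
  rw [hlhs, hrhs, mul_right_inj' hS.ne']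
  exact (strictConcaveOn_rpow hp₀ hp₁).map_add_eq_iff ha hb (by positivity) (by positivity)
    hweights

theorem two_term_holder_eq_iff {p w₀ w₁ f₀ f₁ u₀ u₁ : ℝ} (hp₀ : 0 < p) (hp₁ : p < 1)
    (hw₀ : 0 < w₀) (hw₁ : 0 < w₁) (hf₀ : 0 ≤ f₀) (hf₁ : 0 ≤ f₁) (hu₀ : 0 < u₀) (hu₁ : 0 < u₁) :
    (w₀ * f₀ + w₁ * f₁) ^ p * (w₀ * u₀ + w₁ * u₁) ^ (1 - p) =
        w₀ * f₀ ^ p * u₀ ^ (1 - p) + w₁ * f₁ ^ p * u₁ ^ (1 - p) ↔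
      f₀ / u₀ = f₁ / u₁ := by
  have hterm : ∀ {w f u : ℝ}, 0 < u → 0 ≤ f → w * f ^ p * u ^ (1 - p) = w * u * (f / u) ^ p := by
    intro w f u hu hf
    rw [mul_assoc, mul_assoc, ← mul_rpow_div_eq hu hf]
  have hsum : w₀ * f₀ + w₁ * f₁ = w₀ * u₀ * (f₀ / u₀) + w₁ * u₁ * (f₁ / u₁) := by
    field_simp
  rw [hsum, hterm hu₀ hf₀, hterm hu₁ hf₁]
  exact add_mul_rpow_mul_rpow_one_sub_eq_iff hp₀ hp₁ (by positivity) (by positivity)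
    (by positivity) (by positivity)

end Real

/-- Equality case in the Hölder-type combination of means: equality holds
iff `f0/u0 = f1/u1`. -/
theorem holder_combination_eq_iff (s N f0 f1 u0 u1 : ℝ) (hs : s ∈ Ioo (0:ℝ) 1) (hN : 1 < N)
    (hf0 : 0 < f0) (hf1 : 0 < f1) (hu0 : 0 < u0) (hu1 : 0 < u1) :
    ((1 - s) * f0 + s * f1) ^ (1 / N) * ((1 - s) * u0 + s * u1) ^ ((N - 1) / N) =
      (1 - s) * f0 ^ (1 / N) * u0 ^ ((N - 1) / N) + s * f1 ^ (1 / N) * u1 ^ ((N - 1) / N) ↔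
    f0 / u0 = f1 / u1 := by
  obtain ⟨hs0, hs1⟩ := hs
  have hN0 : 0 < N := by linarith
  have hexp : (N - 1) / N = 1 - 1 / N := by field_simp
  rw [hexp]
  exact two_term_holder_eq_iff (by positivity) ((div_lt_one hN0).2 hN) (by linarith) hs0
    hf0.le hf1.le hu0 hu1
end

section
/- ODE comparison: let κ ∈ ℝ with κ·r² < π² (no conjugate point condition), and let u : [0,1] → (0,∞) be C² with u'' ≤ -κ u on (0,1). Define w(t) = (σ((1-t))/σ(1))·u(0) + (σ(t)/σ(1))·u(1), where σ(t) = sin(√κ t)/√κ if κ > 0, σ(t) = t if κ = 0, σ(t) = sinh(√(-κ) t)/√(-κ) if κ < 0. Then u(t) ≥ w(t) for all t ∈ [0,1]. -/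
/-!
With `W = w' u - w u'` the Wronskian, `(w / u)' = W / u²` and
`W' = w'' u - w u'' ≥ -w (u'' + κ u) ≥ 0` wherever `w ≥ 0`. If `w > u` somewhere, then at an
interior maximum `m` of `w / u` we have `W(m) = 0`, and up to the first point `c > m` where
`w ≤ u` again, `w > u > 0`; so `W ≥ 0` and `w / u` is nondecreasing on `[m, c]`, contradicting
`w(c) / u(c) ≤ 1 < w(m) / u(m)`. The interpolant `w` built from `σ` solves `w'' = -κ w` with
the boundary values of `u`.
-/

open Real Set

/-- The solution `σ` of `σ'' = -κ σ`, `σ(0) = 0`, `σ'(0) = 1`. -/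
noncomputable def sigmaK (κ t : ℝ) : ℝ :=
  if 0 < κ then Real.sin (Real.sqrt κ * t) / Real.sqrt κ
  else if κ = 0 then t
  else Real.sinh (Real.sqrt (-κ) * t) / Real.sqrt (-κ)

noncomputable def cosK (κ t : ℝ) : ℝ :=
  if 0 < κ then Real.cos (Real.sqrt κ * t)
  else if κ = 0 then 1
  else Real.cosh (Real.sqrt (-κ) * t)

@[simp]
lemma sigmaK_zero (κ : ℝ) : sigmaK κ 0 = 0 := by
  unfold sigmaK
  split_ifs <;> simp

lemma hasDerivAt_sigmaK (κ t : ℝ) : HasDerivAt (sigmaK κ) (cosK κ t) t := by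
  unfold sigmaK cosK
  split_ifs with hpos hzero
  · have hs : √κ ≠ 0 := (sqrt_pos.2 hpos).ne'
    exact ((((hasDerivAt_id' t).const_mul √κ).sin).div_const √κ).congr_deriv (by field_simp)
  · exact hasDerivAt_id t
  · have hneg : 0 < -κ := neg_pos.2 ((not_lt.1 hpos).lt_of_ne hzero)
    have hs : √(-κ) ≠ 0 := (sqrt_pos.2 hneg).ne'
    exact ((((hasDerivAt_id' t).const_mul √(-κ)).sinh).div_const √(-κ)).congr_deriv
      (by field_simp)

lemma hasDerivAt_cosK (κ t : ℝ) : HasDerivAt (cosK κ) (-κ * sigmaK κ t) t := by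
  unfold sigmaK cosK
  split_ifs with hpos hzero
  · have hs : √κ ≠ 0 := (sqrt_pos.2 hpos).ne'
    convert ((hasDerivAt_id' t).const_mul √κ).cos using 1
    field_simp
    rw [sq_sqrt hpos.le]
  · simpa [hzero] using hasDerivAt_const t (1 : ℝ)
  · have hneg : 0 < -κ := neg_pos.2 ((not_lt.1 hpos).lt_of_ne hzero)
    have hs : √(-κ) ≠ 0 := (sqrt_pos.2 hneg).ne'
    convert ((hasDerivAt_id' t).const_mul √(-κ)).cosh using 1
    field_simp
    rw [sq_sqrt hneg.le]
    ring

noncomputable def sigmaKInterp (κ A B t : ℝ) : ℝ :=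
  sigmaK κ (1 - t) / sigmaK κ 1 * A + sigmaK κ t / sigmaK κ 1 * B

lemma sigmaKInterp_zero {κ : ℝ} (hσ : sigmaK κ 1 ≠ 0) (A B : ℝ) : sigmaKInterp κ A B 0 = A := by
  simp [sigmaKInterp, hσ]

lemma sigmaKInterp_one {κ : ℝ} (hσ : sigmaK κ 1 ≠ 0) (A B : ℝ) : sigmaKInterp κ A B 1 = B := by
  simp [sigmaKInterp, hσ]

lemma hasDerivAt_sigmaKInterp (κ A B t : ℝ) :
    HasDerivAt (sigmaKInterp κ A B) ((cosK κ t * B - cosK κ (1 - t) * A) / sigmaK κ 1) t := by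
  have hrefl := (hasDerivAt_sigmaK κ (1 - t)).comp t ((hasDerivAt_id' t).const_sub 1)
  exact (((hrefl.div_const (sigmaK κ 1)).mul_const A).add
    (((hasDerivAt_sigmaK κ t).div_const (sigmaK κ 1)).mul_const B)).congr_deriv (by ring)

lemma hasDerivAt_deriv_sigmaKInterp (κ A B t : ℝ) :
    HasDerivAt (fun t ↦ (cosK κ t * B - cosK κ (1 - t) * A) / sigmaK κ 1)
      (-κ * sigmaKInterp κ A B t) t := by
  have hrefl := (hasDerivAt_cosK κ (1 - t)).comp t ((hasDerivAt_id' t).const_sub 1)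
  exact ((((hasDerivAt_cosK κ t).mul_const B).sub (hrefl.mul_const A)).div_const
    (sigmaK κ 1)).congr_deriv (by unfold sigmaKInterp; ring)

lemma exists_first_le_of_continuousOn {f : ℝ → ℝ} {m b y : ℝ} (hmb : m ≤ b)
    (hf : ContinuousOn f (Icc m b)) (hm : y < f m) (hb : f b ≤ y) :
    ∃ c ∈ Ioc m b, f c ≤ y ∧ ∀ x ∈ Ico m c, y < f x := by
  set S := Icc m b ∩ f ⁻¹' Iic y
  have hS : IsCompact S := isCompact_Icc.of_isClosed_subset
    (hf.preimage_isClosed_of_isClosed isClosed_Icc isClosed_Iic) inter_subset_left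
  have hc : sInf S ∈ S := hS.sInf_mem ⟨b, ⟨hmb, le_rfl⟩, hb⟩
  refine ⟨sInf S, ⟨hc.1.1.lt_of_ne ?_, hc.1.2⟩, hc.2, fun x hx ↦ ?_⟩
  · rintro hcm
    exact (hc.2.trans_lt (hcm ▸ hm)).false
  · by_contra! hxy
    exact hx.2.not_ge (csInf_le hS.bddBelow ⟨⟨hx.1, hx.2.le.trans hc.1.2⟩, hxy⟩)

section SturmComparison

variable {κ u u' u'' w w' w'' : ℝ → ℝ}

lemma monotoneOn_wronskian {I : Set ℝ} (hI : Convex ℝ I)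
    (hu' : ∀ t ∈ I, HasDerivAt u (u' t) t) (hu'' : ∀ t ∈ I, HasDerivAt u' (u'' t) t)
    (hw' : ∀ t ∈ I, HasDerivAt w (w' t) t) (hw'' : ∀ t ∈ I, HasDerivAt w' (w'' t) t)
    (hsuper : ∀ t ∈ I, u'' t ≤ -κ t * u t) (hsub : ∀ t ∈ I, -κ t * w t ≤ w'' t)
    (hu : ∀ t ∈ I, 0 ≤ u t) (hw : ∀ t ∈ I, 0 ≤ w t) :
    MonotoneOn (fun t ↦ w' t * u t - w t * u' t) I := by
  have hW : ∀ t ∈ I, HasDerivAt (fun t ↦ w' t * u t - w t * u' t)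
      (w'' t * u t - w t * u'' t) t := fun t ht ↦
    (((hw'' t ht).mul (hu' t ht)).sub ((hw' t ht).mul (hu'' t ht))).congr_deriv (by ring)
  refine monotoneOn_of_hasDerivWithinAt_nonneg hI
    (fun t ht ↦ (hW t ht).continuousAt.continuousWithinAt)
    (fun t ht ↦ (hW t (interior_subset ht)).hasDerivWithinAt) fun t ht ↦ ?_
  replace ht := interior_subset ht
  -- `w'' u - w u'' ≥ -κ w u - w u'' = -w (u'' + κ u) ≥ 0`
  nlinarith [mul_le_mul_of_nonneg_right (hsub t ht) (hu t ht),
    mul_le_mul_of_nonneg_left (hsuper t ht) (hw t ht)]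

lemma monotoneOn_div_of_wronskian_nonneg {m c : ℝ} (hu : ContinuousOn u (Icc m c))
    (hw : ContinuousOn w (Icc m c)) (hu' : ∀ t ∈ Ioo m c, HasDerivAt u (u' t) t)
    (hw' : ∀ t ∈ Ioo m c, HasDerivAt w (w' t) t) (hu0 : ∀ t ∈ Icc m c, u t ≠ 0)
    (hW : ∀ t ∈ Ioo m c, 0 ≤ w' t * u t - w t * u' t) :
    MonotoneOn (fun t ↦ w t / u t) (Icc m c) := by
  refine monotoneOn_of_hasDerivWithinAt_nonneg (convex_Icc m c)
    (f' := fun t ↦ (w' t * u t - w t * u' t) / u t ^ 2) (hw.div hu hu0) (fun t ht ↦ ?_)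
    fun t ht ↦ ?_ <;> rw [interior_Icc] at ht
  · exact ((hw' t ht).div (hu' t ht) (hu0 t (Ioo_subset_Icc_self ht))).hasDerivWithinAt
  · exact div_nonneg (hW t ht) (sq_nonneg _)

theorem le_of_sturm_comparison {a b : ℝ}
    (hu : ContinuousOn u (Icc a b)) (hu' : ∀ t ∈ Ioo a b, HasDerivAt u (u' t) t)
    (hu'' : ∀ t ∈ Ioo a b, HasDerivAt u' (u'' t) t)
    (hw : ContinuousOn w (Icc a b)) (hw' : ∀ t ∈ Ioo a b, HasDerivAt w (w' t) t)
    (hw'' : ∀ t ∈ Ioo a b, HasDerivAt w' (w'' t) t)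
    (hsuper : ∀ t ∈ Ioo a b, u'' t ≤ -κ t * u t) (hsub : ∀ t ∈ Ioo a b, -κ t * w t ≤ w'' t)
    (hupos : ∀ t ∈ Icc a b, 0 < u t) (ha : w a ≤ u a) (hb : w b ≤ u b) :
    ∀ t ∈ Icc a b, w t ≤ u t := by
  by_contra! ⟨t, ht, hlt⟩
  have hle_iff : ∀ x ∈ Icc a b, w x / u x ≤ 1 ↔ w x ≤ u x := fun x hx ↦ div_le_one (hupos x hx)
  have hφ : ContinuousOn (fun x ↦ w x / u x) (Icc a b) :=
    hw.div hu fun x hx ↦ (hupos x hx).ne'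
  obtain ⟨m, hm, hmax⟩ := isCompact_Icc.exists_isMaxOn ⟨t, ht⟩ hφ
  have hm1 : 1 < w m / u m := ((one_lt_div (hupos t ht)).2 hlt).trans_le (hmax ht)
  have hab : a ≤ b := ht.1.trans ht.2
  have hmab : m ∈ Ioo a b :=
    ⟨hm.1.lt_of_ne (by rintro rfl; exact hm1.not_ge ((hle_iff _ hm).2 ha)),
      hm.2.lt_of_ne (by rintro rfl; exact hm1.not_ge ((hle_iff _ hm).2 hb))⟩
  obtain ⟨c, hc, hc1, hgt⟩ := exists_first_le_of_continuousOn hmab.2.le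
    (hφ.mono (Icc_subset_Icc_left hm.1)) hm1 ((hle_iff b ⟨hab, le_rfl⟩).2 hb)
  have hmc : Ico m c ⊆ Ioo a b := fun x hx ↦ ⟨hmab.1.trans_le hx.1, hx.2.trans_le hc.2⟩
  have hwu : ∀ x ∈ Ico m c, u x < w x := fun x hx ↦
    (one_lt_div (hupos x (Ioo_subset_Icc_self (hmc hx)))).1 (hgt x hx)
  have hφ' : ∀ x ∈ Ioo a b, HasDerivAt (fun x ↦ w x / u x)
      ((w' x * u x - w x * u' x) / u x ^ 2) x := fun x hx ↦
    (hw' x hx).div (hu' x hx) (hupos x (Ioo_subset_Icc_self hx)).ne'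
  have hWm : w' m * u m - w m * u' m = 0 := by
    have := (hmax.isLocalMax (Icc_mem_nhds hmab.1 hmab.2)).hasDerivAt_eq_zero (hφ' m hmab)
    simpa [(hupos m hm).ne'] using this
  have hWmono := monotoneOn_wronskian (convex_Ico m c)
    (fun x hx ↦ hu' x (hmc hx)) (fun x hx ↦ hu'' x (hmc hx)) (fun x hx ↦ hw' x (hmc hx))
    (fun x hx ↦ hw'' x (hmc hx)) (fun x hx ↦ hsuper x (hmc hx)) (fun x hx ↦ hsub x (hmc hx))
    (fun x hx ↦ (hupos x (Ioo_subset_Icc_self (hmc hx))).le)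
    (fun x hx ↦ (hupos x (Ioo_subset_Icc_self (hmc hx))).le.trans (hwu x hx).le)
  have hφmono : MonotoneOn (fun x ↦ w x / u x) (Icc m c) :=
    monotoneOn_div_of_wronskian_nonneg (hu.mono (Icc_subset_Icc hm.1 hc.2))
      (hw.mono (Icc_subset_Icc hm.1 hc.2)) (fun x hx ↦ hu' x (hmc (Ioo_subset_Ico_self hx)))
      (fun x hx ↦ hw' x (hmc (Ioo_subset_Ico_self hx)))
      (fun x hx ↦ (hupos x (Icc_subset_Icc hm.1 hc.2 hx)).ne')
      fun x hx ↦ hWm ▸ hWmono (left_mem_Ico.2 hc.1) (Ioo_subset_Ico_self hx) hx.1.le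
  exact hm1.not_ge (le_trans (hφmono (left_mem_Icc.2 hc.1.le) (right_mem_Icc.2 hc.1.le)
    hc.1.le) hc1)

end SturmComparison

theorem ode_comparison_general (κ : ℝ) (u : ℝ → ℝ)
    (hu : ContDiffOn ℝ 2 u (Icc 0 1)) (hupos : ∀ t ∈ Icc (0:ℝ) 1, 0 < u t)
    (hu'' : ∀ t ∈ Ioo (0:ℝ) 1, deriv (deriv u) t ≤ -κ * u t) :
    ∀ t ∈ Icc (0:ℝ) 1,
      sigmaK κ (1 - t) / sigmaK κ 1 * u 0 + sigmaK κ t / sigmaK κ 1 * u 1 ≤ u t := by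
  by_cases hσ : sigmaK κ 1 = 0
  -- `x / 0 = 0`: the left-hand side vanishes
  · intro t ht
    simpa [hσ] using (hupos t ht).le
  have hu₂ : ContDiffOn ℝ 2 u (Ioo 0 1) := hu.mono Ioo_subset_Icc_self
  have hu₁ : ContDiffOn ℝ 1 (deriv u) (Ioo 0 1) :=
    hu₂.deriv_of_isOpen isOpen_Ioo (by norm_num)
  exact le_of_sturm_comparison (κ := fun _ ↦ κ) (w := sigmaKInterp κ (u 0) (u 1))
    (w'' := fun t ↦ -κ * sigmaKInterp κ (u 0) (u 1) t) hu.continuousOn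
    (fun t ht ↦ ((hu₂.differentiableOn two_ne_zero).differentiableAt
      (isOpen_Ioo.mem_nhds ht)).hasDerivAt)
    (fun t ht ↦ ((hu₁.differentiableOn one_ne_zero).differentiableAt
      (isOpen_Ioo.mem_nhds ht)).hasDerivAt)
    (fun t _ ↦ (hasDerivAt_sigmaKInterp κ _ _ t).continuousAt.continuousWithinAt)
    (fun t _ ↦ hasDerivAt_sigmaKInterp κ _ _ t) (fun t _ ↦ hasDerivAt_deriv_sigmaKInterp κ _ _ t)
    hu'' (fun _ _ ↦ le_rfl) hupos (sigmaKInterp_zero hσ _ _).le (sigmaKInterp_one hσ _ _).le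

/-- ODE comparison: under the no-conjugate-point condition `κ r² < π²`, a positive `C²`
function with `u'' ≤ -κ u` dominates the solution of `w'' = -κ w` with the same
boundary values. -/
theorem ode_comparison (κ r : ℝ) (hκ : κ * r ^ 2 < Real.pi ^ 2) (u : ℝ → ℝ)
    (hu : ContDiffOn ℝ 2 u (Icc 0 1)) (hupos : ∀ t ∈ Icc (0:ℝ) 1, 0 < u t)
    (hu'' : ∀ t ∈ Ioo (0:ℝ) 1, deriv (deriv u) t ≤ -κ * u t) :
    ∀ t ∈ Icc (0:ℝ) 1,
      sigmaK κ (1 - t) / sigmaK κ 1 * u 0 + sigmaK κ t / sigmaK κ 1 * u 1 ≤ u t :=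
  ode_comparison_general κ u hu hupos hu''
end

section
/- Example attaining equality in the weighted Brunn–Minkowski inequality on the half-space: let n ≥ 1, N ≥ n, and let m be the measure on ℝⁿ with density ‖x‖^{N-n} with respect to Lebesgue measure. Let A = B_r(e) be the open ball of radius 0 < r < 1 centered at e = (0,…,0,1) and B = 2A = B_{2r}(2e). Then for every t ∈ [0,1], the t-intermediate set satisfies Z_t(A,B) = (1+t)A, and m((1+t)A) = (1+t)^N m(A), so that m(Z_t(A,B))^{1/N} = (1-t) m(A)^{1/N} + t m(B)^{1/N}. -/
open Real Set MeasureTheory Pointwise Module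

/-!
`A` is convex and `B = 2 • A`, so `(1 - t) • A + t • B = (1 - t) • A + (2 * t) • A = (1 + t) • A`.
The density `‖x‖ ^ (N - n)` is homogeneous of degree `N - n` and Lebesgue measure of degree `n`,
so `m (c • A) = c ^ N * m A`; after taking `N`-th roots both sides of the Brunn–Minkowski
inequality equal `(1 + t) * m A ^ (1 / N)`.
-/

theorem ofReal_norm_smul_rpow {E : Type*} [NormedAddCommGroup E] [NormedSpace ℝ E] (p : ℝ)
    {c : ℝ} (hc : 0 < c) (x : E) :
    ENNReal.ofReal (‖c • x‖ ^ p) = ENNReal.ofReal (c ^ p) * ENNReal.ofReal (‖x‖ ^ p) := by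
  rw [norm_smul_of_nonneg hc.le, Real.mul_rpow hc.le (norm_nonneg x),
    ENNReal.ofReal_mul (by positivity)]

section Homogeneity

variable {E : Type*} [NormedAddCommGroup E] [NormedSpace ℝ E] [MeasurableSpace E] [BorelSpace E]
  [FiniteDimensional ℝ E] (μ : Measure E) [μ.IsAddHaarMeasure]

theorem Measure.addHaar_setLIntegral_smul_set (f : E → ENNReal) {c : ℝ} (hc : 0 < c) (S : Set E) :
    ∫⁻ x in c • S, f x ∂μ = ENNReal.ofReal (c ^ finrank ℝ E) * ∫⁻ x in S, f (c • x) ∂μ := by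
  have hmap := Measure.map_addHaar_smul μ hc.ne'
  rw [((measurable_const_smul c).measurePreserving μ).setLIntegral_comp_emb
      (measurableEmbedding_const_smul₀ hc.ne') f S, image_smul, hmap, Measure.restrict_smul,
    lintegral_smul_measure, smul_eq_mul, ← mul_assoc, ← ENNReal.ofReal_mul (by positivity),
    abs_of_pos (by positivity), mul_inv_cancel₀ (by positivity), ENNReal.ofReal_one, one_mul]

theorem withDensity_norm_rpow_smul_set (p : ℝ) {c : ℝ} (hc : 0 < c) (S : Set E) :
    μ.withDensity (fun x => ENNReal.ofReal (‖x‖ ^ p)) (c • S) =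
      ENNReal.ofReal (c ^ (p + finrank ℝ E)) *
        μ.withDensity (fun x => ENNReal.ofReal (‖x‖ ^ p)) S := by
  rw [withDensity_apply' _ _, withDensity_apply' _ _, Measure.addHaar_setLIntegral_smul_set μ _ hc]
  simp_rw [ofReal_norm_smul_rpow p hc]
  rw [lintegral_const_mul' _ _ ENNReal.ofReal_ne_top, ← mul_assoc,
    ← ENNReal.ofReal_mul (by positivity), Real.rpow_add hc, Real.rpow_natCast, mul_comm (c ^ p)]

end Homogeneity

theorem setOf_exists_smul_add_smul_eq {E : Type*} [AddCommGroup E] [Module ℝ E] (A B : Set E)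
    (a b : ℝ) : {z | ∃ x ∈ A, ∃ y ∈ B, z = a • x + b • y} = a • A + b • B := by
  ext z
  constructor
  · rintro ⟨x, hx, y, hy, rfl⟩
    exact add_mem_add (smul_mem_smul_set hx) (smul_mem_smul_set hy)
  · rintro ⟨_, ⟨x, hx, rfl⟩, _, ⟨y, hy, rfl⟩, rfl⟩
    exact ⟨x, hx, y, hy, rfl⟩

theorem Convex.setOf_combo_smul_self {E : Type*} [AddCommGroup E] [Module ℝ E] {A : Set E}
    (hA : Convex ℝ A) {t c : ℝ} (ht0 : 0 ≤ t) (ht1 : t ≤ 1) (hc : 0 ≤ c) :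
    {z | ∃ x ∈ A, ∃ y ∈ c • A, z = (1 - t) • x + t • y} = (1 - t + t * c) • A := by
  rw [setOf_exists_smul_add_smul_eq, smul_smul, hA.add_smul (by linarith) (by positivity)]

theorem ENNReal.ofReal_rpow_mul_rpow_one_div {N c : ℝ} (hN : 0 < N) (hc : 0 < c) (a : ENNReal) :
    (ENNReal.ofReal (c ^ N) * a) ^ (1 / N) = ENNReal.ofReal c * a ^ (1 / N) := by
  rw [ENNReal.mul_rpow_of_nonneg _ _ (by positivity), ENNReal.ofReal_rpow_of_pos (by positivity),
    ← Real.rpow_mul hc.le, mul_one_div_cancel hN.ne', Real.rpow_one]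

/-- Equality case of the weighted Brunn–Minkowski inequality on the half-space:
with the measure of density `‖x‖^(N-n)`, `A` a ball centered at `e = (0,…,0,1)` of
radius `r < 1` and `B = 2A`, the `t`-intermediate set is `(1+t)A`, has measure
`(1+t)^N m(A)`, and equality holds in Brunn–Minkowski. -/
theorem brunn_minkowski_equality_example (n : ℕ) (hn : 1 ≤ n) (N : ℝ) (hN : (n : ℝ) ≤ N)
    (r : ℝ) :
    ∀ t ∈ Icc (0:ℝ) 1,
      letI e : EuclideanSpace ℝ (Fin n) := EuclideanSpace.single ⟨n - 1, by omega⟩ (1 : ℝ)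
      letI m : Measure (EuclideanSpace ℝ (Fin n)) :=
        volume.withDensity fun x => ENNReal.ofReal (‖x‖ ^ (N - n))
      letI A : Set (EuclideanSpace ℝ (Fin n)) := Metric.ball e r
      letI B : Set (EuclideanSpace ℝ (Fin n)) := Metric.ball ((2 : ℝ) • e) (2 * r)
      {z | ∃ x ∈ A, ∃ y ∈ B, z = (1 - t) • x + t • y} = (1 + t) • A ∧
      m ((1 + t) • A) = ENNReal.ofReal ((1 + t) ^ N) * m A ∧
      (m {z | ∃ x ∈ A, ∃ y ∈ B, z = (1 - t) • x + t • y}) ^ (1 / N)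
        = ENNReal.ofReal (1 - t) * (m A) ^ (1 / N) + ENNReal.ofReal t * (m B) ^ (1 / N) := by
  rintro t ⟨ht0, ht1⟩
  generalize EuclideanSpace.single (_ : Fin n) (1 : ℝ) = e
  set m : Measure (EuclideanSpace ℝ (Fin n)) :=
    volume.withDensity fun x => ENNReal.ofReal (‖x‖ ^ (N - n))
  set A := Metric.ball e r
  have hB : Metric.ball ((2 : ℝ) • e) (2 * r) = (2 : ℝ) • A := by
    rw [smul_ball two_ne_zero, Real.norm_ofNat]
  have hZ : {z | ∃ x ∈ A, ∃ y ∈ Metric.ball ((2 : ℝ) • e) (2 * r), z = (1 - t) • x + t • y} =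
      (1 + t) • A := by
    rw [hB, (convex_ball e r).setOf_combo_smul_self ht0 ht1 zero_le_two]
    congr 1
    ring
  have hm : ∀ c : ℝ, 0 < c → m (c • A) = ENNReal.ofReal (c ^ N) * m A := fun c hc => by
    rw [withDensity_norm_rpow_smul_set volume _ hc, finrank_euclideanSpace_fin, sub_add_cancel]
  have hNpos : 0 < N := lt_of_lt_of_le (by exact_mod_cast hn) hN
  refine ⟨hZ, hm _ (by linarith), ?_⟩
  rw [hZ, hB, hm _ (by linarith), hm _ two_pos,
    ENNReal.ofReal_rpow_mul_rpow_one_div hNpos (by linarith),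
    ENNReal.ofReal_rpow_mul_rpow_one_div hNpos two_pos, ← mul_assoc, ← ENNReal.ofReal_mul ht0,
    ← add_mul, ← ENNReal.ofReal_add (by linarith) (by positivity)]
  congr 2
  ring
end
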